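/- If a directed acyclic graph D admits a fractional black-white pebbling using total pebble weight at most p, then D admits a whole black-white pebbling using at most 2p pebbles. -/
import Mathlib


/-! ## Fractional black-white pebbling -/

/-- A fractional pebble configuration: black and white pebble values on each node. -/
structure FConfig (V : Type) where
  b : V → ℝ
  w : V → ℝ

namespace FConfig

/-- Validity: all values nonnegative, total value of each node at most 1. -/
def Valid {V : Type} (C : FConfig V) : Prop :=
  ∀ v, 0 ≤ C.b v ∧ 0 ≤ C.w v ∧ C.b v + C.w v ≤ 1

/-- Total pebble weight of a configuration. -/
noncomputable def weight {V : Type} [Fintype V] (C : FConfig V) : ℝ :=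
  ∑ v, (C.b v + C.w v)

/-- The empty configuration. -/
def zero (V : Type) : FConfig V := ⟨fun _ => 0, fun _ => 0⟩

/-- A whole (non-fractional) configuration: all values 0 or 1. -/
def Whole {V : Type} (C : FConfig V) : Prop :=
  ∀ v, (C.b v = 0 ∨ C.b v = 1) ∧ (C.w v = 0 ∨ C.w v = 1)

/-- A black configuration: whole, and with no white pebbles. -/
def BlackOnly {V : Type} (C : FConfig V) : Prop :=
  C.Whole ∧ ∀ v, C.w v = 0

end FConfig

/-- One legal move of the fractional black-white pebble game (no white sliding):
(i) decrease a black value; (ii) increase a white value; (iii) if every child of `v`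
has total pebble value 1, decrease `w v` to 0 and/or increase `b v` arbitrarily while
simultaneously decreasing the black values of the children of `v` arbitrarily.
Here `child c v` means `c` is a child of `v`. -/
def FMove {V : Type} (child : V → V → Prop) (C C' : FConfig V) : Prop :=
  (∃ v, C'.b v ≤ C.b v ∧ C'.w v = C.w v ∧
     ∀ u, u ≠ v → C'.b u = C.b u ∧ C'.w u = C.w u) ∨
  (∃ v, C'.b v = C.b v ∧ C.w v ≤ C'.w v ∧
     ∀ u, u ≠ v → C'.b u = C.b u ∧ C'.w u = C.w u) ∨
  (∃ v, (∀ c, child c v → C.b c + C.w c = 1) ∧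
     C.b v ≤ C'.b v ∧ (C'.w v = 0 ∨ C'.w v = C.w v) ∧
     (∀ c, child c v → C'.b c ≤ C.b c ∧ C'.w c = C.w c) ∧
     (∀ u, u ≠ v → ¬ child u v → C'.b u = C.b u ∧ C'.w u = C.w u))

/-- The additional white sliding move: if `w v = 1`, `j` is a child of `v`, and every
child of `v` other than `j` has total pebble value 1, then set `w v = 0` and increase
`w j` so that `j` gets total pebble value 1. -/
def WhiteSlide {V : Type} (child : V → V → Prop) (C C' : FConfig V) : Prop :=
  ∃ v j, child j v ∧ j ≠ v ∧ C.w v = 1 ∧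
    (∀ c, child c v → c ≠ j → C.b c + C.w c = 1) ∧
    C'.w v = 0 ∧ C'.b v = C.b v ∧
    C'.b j = C.b j ∧ C.w j ≤ C'.w j ∧ C'.b j + C'.w j = 1 ∧
    (∀ u, u ≠ v → u ≠ j → C'.b u = C.b u ∧ C'.w u = C.w u)

/-- A pebbling of cost at most `p`, with moves given by `move`, all configurations
satisfying the extra constraint `Extra`, starting and ending with the empty
configuration and achieving `Goal` (a property of the whole sequence together with
its length). -/
def PebblingLE {V : Type} [Fintype V] (move : FConfig V → FConfig V → Prop)
    (Extra : FConfig V → Prop) (Goal : (ℕ → FConfig V) → ℕ → Prop) (p : ℝ) : Prop :=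
  ∃ (n : ℕ) (C : ℕ → FConfig V),
    C 0 = FConfig.zero V ∧ C n = FConfig.zero V ∧
    (∀ t ≤ n, (C t).Valid) ∧
    (∀ t ≤ n, Extra (C t)) ∧
    (∀ t < n, move (C t) (C (t + 1))) ∧
    Goal C n ∧
    (∀ t ≤ n, (C t).weight ≤ p)

/-! ## The complete `d`-ary tree of height `h` (with `h` levels) -/

/-- Nodes of the complete `d`-ary tree with `h` levels: a level `l < h`
together with an index among the `d ^ l` nodes of that level. -/
abbrev TNode (d h : ℕ) := Σ l : Fin h, Fin (d ^ (l : ℕ))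

/-- `c` is a child of `v` in the complete `d`-ary tree. -/
def IsChild (d h : ℕ) (c v : TNode d h) : Prop :=
  (c.1 : ℕ) = (v.1 : ℕ) + 1 ∧ ∃ j : Fin d, (c.2 : ℕ) = d * (v.2 : ℕ) + (j : ℕ)

/-- The root of the tree. -/
def troot (d h : ℕ) (hh : 0 < h) : TNode d h :=
  ⟨⟨0, hh⟩, ⟨0, by simp⟩⟩

/-- The tree `T_d^h` has a black pebbling of cost at most `p`. -/
def BlackPebbles (d h : ℕ) (hh : 0 < h) (p : ℝ) : Prop :=
  PebblingLE (FMove (IsChild d h)) FConfig.BlackOnly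
    (fun C n => ∃ t ≤ n, (C t).b (troot d h hh) = 1) p

/-- The tree `T_d^h` has a whole black-white pebbling (no white sliding)
of cost at most `p`. -/
def BWPebbles (d h : ℕ) (hh : 0 < h) (p : ℝ) : Prop :=
  PebblingLE (FMove (IsChild d h)) FConfig.Whole
    (fun C n => ∃ t ≤ n, (C t).b (troot d h hh) = 1) p

/-- The tree `T_d^h` has a fractional pebbling of cost at most `p`. -/
def FRPebbles (d h : ℕ) (hh : 0 < h) (p : ℝ) : Prop :=
  PebblingLE (FMove (IsChild d h)) (fun _ => True)
    (fun C n => ∃ t ≤ n, (C t).b (troot d h hh) = 1) p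

/-- Fractional pebbling of `T_d^h` where white sliding moves are also permitted. -/
def FRPebblesWS (d h : ℕ) (hh : 0 < h) (p : ℝ) : Prop :=
  PebblingLE (fun C C' => FMove (IsChild d h) C C' ∨ WhiteSlide (IsChild d h) C C')
    (fun _ => True)
    (fun C n => ∃ t ≤ n, (C t).b (troot d h hh) = 1) p

/-- `v` is a sink (root) of the DAG whose edge relation is `E c p` = "`c` is a child of `p`". -/
def IsSink {V : Type} (E : V → V → Prop) (v : V) : Prop := ∀ u, ¬ E v u

/-- Rounding a fractional configuration to a whole one. -/
noncomputable def roundC {V : Type} (C : FConfig V) : FConfig V :=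
  ⟨fun v => if (1:ℝ)/2 ≤ C.b v then 1 else 0,
   fun v => if (1:ℝ)/2 < C.w v then 1 else 0⟩

lemma roundC_whole {V : Type} (C : FConfig V) : (roundC C).Whole := by
  intro v
  constructor <;> [skip; skip] <;>
    simp only [roundC] <;> split <;> simp

lemma roundC_valid {V : Type} (C : FConfig V) (h : C.Valid) : (roundC C).Valid := by
  intro v
  obtain ⟨hb, hw, hbw⟩ := h v
  simp only [roundC]
  refine ⟨by positivity, by positivity, ?_⟩
  split <;> split <;> try norm_num
  linarith

lemma roundC_zero {V : Type} : roundC (FConfig.zero V) = FConfig.zero V := by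
  simp only [roundC, FConfig.zero]
  norm_num

lemma roundC_full {V : Type} (C : FConfig V) (h : C.Valid) (v : V)
    (hv : C.b v + C.w v = 1) : (roundC C).b v + (roundC C).w v = 1 := by
  obtain ⟨hb, hw, _⟩ := h v
  simp only [roundC]
  by_cases hcase : (1:ℝ)/2 ≤ C.b v
  · rw [if_pos hcase, if_neg (by linarith)]; norm_num
  · rw [if_neg hcase, if_pos (by linarith)]; norm_num

lemma roundC_b_mono {V : Type} (C C' : FConfig V) (v : V) (h : C'.b v ≤ C.b v) :
    (roundC C').b v ≤ (roundC C).b v := by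
  simp only [roundC]
  split <;> split <;> linarith

lemma roundC_w_mono {V : Type} (C C' : FConfig V) (v : V) (h : C.w v ≤ C'.w v) :
    (roundC C).w v ≤ (roundC C').w v := by
  simp only [roundC]
  split <;> split <;> linarith

lemma roundC_weight {V : Type} [Fintype V] (C : FConfig V) (h : C.Valid) :
    (roundC C).weight ≤ 2 * C.weight := by
  unfold FConfig.weight
  rw [Finset.mul_sum]
  apply Finset.sum_le_sum
  intro v _
  obtain ⟨hb, hw, hbw⟩ := h v
  simp only [roundC]
  split <;> split <;> [linarith; linarith; linarith; linarith]

lemma roundC_move {V : Type} (E : V → V → Prop) (C C' : FConfig V)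
    (hC : C.Valid) (hm : FMove E C C') : FMove E (roundC C) (roundC C') := by
  rcases hm with ⟨v, h1, h2, h3⟩ | ⟨v, h1, h2, h3⟩ | ⟨v, hch, h1, h2, h3, h4⟩
  · left
    refine ⟨v, roundC_b_mono C C' v h1, by simp only [roundC, h2], fun u hu => ?_⟩
    obtain ⟨e1, e2⟩ := h3 u hu
    exact ⟨by simp only [roundC, e1], by simp only [roundC, e2]⟩
  · right; left
    refine ⟨v, by simp only [roundC, h1], roundC_w_mono C C' v h2, fun u hu => ?_⟩
    obtain ⟨e1, e2⟩ := h3 u hu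
    exact ⟨by simp only [roundC, e1], by simp only [roundC, e2]⟩
  · right; right
    refine ⟨v, fun c hc => roundC_full C hC c (hch c hc),
      roundC_b_mono C' C v h1, ?_, fun c hc => ?_, fun u hu hnc => ?_⟩
    · rcases h2 with h2 | h2
      · left; simp only [roundC, h2]; norm_num
      · right; simp only [roundC, h2]
    · obtain ⟨e1, e2⟩ := h3 c hc
      exact ⟨roundC_b_mono C C' c e1, by simp only [roundC, e2]⟩
    · obtain ⟨e1, e2⟩ := h4 u hu hnc
      exact ⟨by simp only [roundC, e1], by simp only [roundC, e2]⟩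

/-- If a finite DAG `D` admits a fractional black-white pebbling of total weight at most
`p` (at some point each sink has black value 1), then it admits a whole black-white
pebbling using at most `2p` pebbles. -/
theorem frac_to_whole_dag (V : Type) [Fintype V] [DecidableEq V] (E : V → V → Prop)
    (hacyc : Irreflexive (Relation.TransGen E)) (p : ℝ)
    (hfrac : PebblingLE (FMove E) (fun _ => True)
      (fun C n => ∀ v, IsSink E v → ∃ t ≤ n, (C t).b v = 1) p) :
    PebblingLE (FMove E) FConfig.Whole
      (fun C n => ∀ v, IsSink E v → ∃ t ≤ n, (C t).b v = 1) (2 * p) := by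
  obtain ⟨n, C, h0, hn, hval, -, hmove, hgoal, hw⟩ := hfrac
  refine ⟨n, fun t => roundC (C t), by simp only [h0, roundC_zero], by simp only [hn, roundC_zero],
    fun t ht => roundC_valid _ (hval t ht), fun t _ => roundC_whole _,
    fun t ht => roundC_move E _ _ (hval t (le_of_lt ht)) (hmove t ht),
    fun v hv => ?_, fun t ht => ?_⟩
  · obtain ⟨t, ht, hb⟩ := hgoal v hv
    refine ⟨t, ht, ?_⟩
    simp only [roundC, hb]
    norm_num
  · calc (roundC (C t)).weight ≤ 2 * (C t).weight := roundC_weight _ (hval t ht)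
      _ ≤ 2 * p := by linarith [hw t ht]
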